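/- arXiv:1310.5313 — 4 statements merged into one kernel-verified Lean document; each statement's English description precedes it below -/
import Mathlib

section
/- For any signed permutation σ = σ₁σ₂⋯σₙ on {1,…,n} (each σᵢ is ±π(i) for a permutation π), the generating function ∑_{t≥0} Ω_σ(t) x^t equals x^{des_B(σ)} / (1-x)^{n+1}, where Ω_σ(t) is the number of σ-compatible maps g with g(σ₁) ≤ t, as a formal power series identity. -/
open Finset

/-- Type B descent number of a signed word `σ : Fin m → ℤ`:
counts `i` with `σ i > σ (i+1)`, plus 1 if the last entry is positive. -/
def desB {m : ℕ} (σ : Fin m → ℤ) : ℕ :=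
  (Finset.univ.filter fun i : Fin m =>
    (if h : (i : ℕ) + 1 < m then σ ⟨(i : ℕ) + 1, h⟩ else 0) < σ i).card

/-- Ascent number of an `s`-inversion sequence `e` (with `s` 1-indexed),
using the convention `e₀ = 0`, `s₀ = 1`. -/
def asc {m : ℕ} (s : ℕ → ℕ) (e : Fin m → ℕ) : ℕ :=
  (Finset.univ.filter fun i : Fin m =>
    (if (i : ℕ) = 0 then (0 : ℚ)
     else (e ⟨(i : ℕ) - 1, Nat.lt_of_le_of_lt (Nat.sub_le _ _) i.isLt⟩ : ℚ) / s (i : ℕ))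
      < (e i : ℚ) / s ((i : ℕ) + 1)).card

/-- The finset of `s`-inversion sequences of length `m` (with `s` 1-indexed). -/
def invSeqs (s : ℕ → ℕ) (m : ℕ) : Finset (Fin m → ℕ) :=
  Fintype.piFinset fun i => Finset.range (s ((i : ℕ) + 1))

/-- `s = (1,4,3,8,5,12,…)`: `s_{2i-1} = 2i-1`, `s_{2i} = 4i` (1-indexed). -/
def sA (k : ℕ) : ℕ := if k % 2 = 1 then k else 2 * k

/-- `s = (2,2,6,4,10,6,…)`: `s_{2i-1} = 4i-2`, `s_{2i} = 2i` (1-indexed). -/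
def sB (k : ℕ) : ℕ := if k % 2 = 1 then 2 * k else k

/-- `s' = (1,1,3,2,5,3,…)`: `s'_{2i-1} = 2i-1`, `s'_{2i} = i` (1-indexed). -/
def sC (k : ℕ) : ℕ := if k % 2 = 1 then k else k / 2

/-- The lecture hall counting function `f_n^{(s)}(t)`: the number of `n`-tuples
`(λ₁,…,λₙ)` of nonnegative integers with `0 ≤ λ₁/s₁ ≤ ⋯ ≤ λₙ/sₙ ≤ t`. -/
def lhall (s : ℕ → ℕ) (n t : ℕ) : ℕ :=
  ((Fintype.piFinset fun i : Fin n => Finset.range (t * s ((i : ℕ) + 1) + 1)).filter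
    fun lam => ∀ i : Fin n, ∀ h : (i : ℕ) + 1 < n,
      lam i * s ((i : ℕ) + 2) ≤ lam ⟨(i : ℕ) + 1, h⟩ * s ((i : ℕ) + 1)).card

/-- The finset of signed permutations of length `m` on a multiset `M` of
positive integers: words `σ` whose multiset of absolute values is `M`. -/
def sperm (m : ℕ) (M : Multiset ℤ) : Finset (Fin m → ℤ) :=
  (Fintype.piFinset fun _ : Fin m => M.toFinset ∪ M.toFinset.image (fun x => -x)).filter
    fun σ => (Finset.univ.val.map fun i => |σ i|) = M

/-- The multiset `{1,1,2,2,…,n,n}`. -/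
def Pmult (n : ℕ) : Multiset ℤ :=
  (Multiset.range n).bind fun k => {(k : ℤ) + 1, (k : ℤ) + 1}

/-- The multiset `{1,1,2,2,…,n-1,n-1,n}`. -/
def Umult (n : ℕ) : Multiset ℤ :=
  ((Multiset.range (n - 1)).bind fun k => {(k : ℤ) + 1, (k : ℤ) + 1}) + {(n : ℤ)}

/-- `P_n`: signed permutations on `{1²,2²,…,n²}`. -/
def Pset (n : ℕ) : Finset (Fin (2 * n) → ℤ) := sperm (2 * n) (Pmult n)

/-- `U_n`: signed permutations on `{1²,2²,…,(n-1)²,n}`. -/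
def Uset (n : ℕ) : Finset (Fin (2 * n - 1) → ℤ) := sperm (2 * n - 1) (Umult n)

/-- `V_n`: signed permutations on `{1²,2²,…,(n-1)²,n}` where `n` carries a minus sign. -/
def Vset (n : ℕ) : Finset (Fin (2 * n - 1) → ℤ) :=
  (Uset n).filter fun σ => ∀ i, |σ i| = (n : ℤ) → σ i < 0

/-- `Ω_σ(t)`: the number of `σ`-compatible maps `g` with `g(σ₁) ≤ t`, recorded
as the tuple `(g(σ₁),…,g(σₙ))`. -/
def Omega {n : ℕ} (σ : Fin n → ℤ) (t : ℕ) : ℕ :=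
  ((Fintype.piFinset fun _ : Fin n => Finset.range (t + 1)).filter fun g =>
    (∀ i : Fin n, ∀ h : (i : ℕ) + 1 < n,
      g ⟨(i : ℕ) + 1, h⟩ ≤ g i ∧ (σ ⟨(i : ℕ) + 1, h⟩ < σ i → g ⟨(i : ℕ) + 1, h⟩ < g i)) ∧
    (∀ i : Fin n, (i : ℕ) = n - 1 → 0 < σ i → 1 ≤ g i)).card

/-- Linear extensions of the plane forest `F_n` consisting of `n` two-vertex trees:
`π j` is the vertex placed at position `j`, where the root of the `i`-th tree is
vertex `2i` and its child is vertex `2i+1`; roots must precede their children. -/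
def linExts (n : ℕ) : Finset (Equiv.Perm (Fin (2 * n))) :=
  Finset.univ.filter fun π => ∀ i : Fin n,
    π.symm ⟨2 * (i : ℕ), by have := i.isLt; omega⟩ <
      π.symm ⟨2 * (i : ℕ) + 1, by have := i.isLt; omega⟩

/-- The signed labelings `L(F_n)`: for each `i` (0-indexed), the labels of the root
and the child of the `i`-th tree form one of the four allowed pairs. -/
noncomputable def labelings (n : ℕ) : Finset (Fin (2 * n) → ℤ) :=
  (Fintype.piFinset fun _ : Fin (2 * n) => Finset.Icc (-(2 * n : ℤ)) (2 * n)).filter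
    fun w => ∀ i : Fin n,
      (w ⟨2 * (i : ℕ), by have := i.isLt; omega⟩,
       w ⟨2 * (i : ℕ) + 1, by have := i.isLt; omega⟩) ∈
        ({(2 * (i : ℤ) + 2, 2 * (i : ℤ) + 1), (2 * (i : ℤ) + 2, -(2 * (i : ℤ) + 1)),
          (-(2 * (i : ℤ) + 2), 2 * (i : ℤ) + 1), (-(2 * (i : ℤ) + 1), -(2 * (i : ℤ) + 2))} :
          Finset (ℤ × ℤ))

/-- The descent statistic `|{i : σᵢ > σᵢ₊₁}| + [σ₁ < 0]`. -/
def desA {m : ℕ} (σ : Fin m → ℤ) : ℕ :=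
  (Finset.univ.filter fun i : Fin m =>
    if h : (i : ℕ) + 1 < m then σ ⟨(i : ℕ) + 1, h⟩ < σ i else False).card
  + (Finset.univ.filter fun i : Fin m => (i : ℕ) = 0 ∧ σ i < 0).card

/-- The map `σ₁⋯σₙ ↦ (−σₙ)(−σₙ₋₁)⋯(−σ₁)`. -/
def revNeg {m : ℕ} (σ : Fin m → ℤ) : Fin m → ℤ := fun i => -σ i.rev

open Polynomial PowerSeries

/-! Put σₙ₊₁ = 0 and let `e i` be the number of non-descents of σ at positions `≥ i`. A
σ-compatible map is weakly decreasing, strictly at descents, with `g(σₙ) ≥ 1` when `σₙ > 0`;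
adding `e` turns exactly these conditions into "strictly decreasing and positive". So `g ↦ g + e`
is a bijection from the maps with `g(σ₁) ≤ t` onto the strictly decreasing sequences in
`{1, …, t + n - des_B σ}`, i.e. onto its `n`-subsets, and `Ω_σ(t) = C(t + n - des_B σ, n)`. -/

section NextVal

variable {n : ℕ} {α : Type*}

def nextVal [Zero α] (f : Fin n → α) (i : Fin n) : α :=
  if h : (i : ℕ) + 1 < n then f ⟨(i : ℕ) + 1, h⟩ else 0

lemma nextVal_add [AddZeroClass α] (f g : Fin n → α) (i : Fin n) :
    nextVal (f + g) i = nextVal f i + nextVal g i := by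
  unfold nextVal
  split_ifs <;> simp

lemma nextVal_of_covBy [Zero α] (f : Fin n → α) {i j : Fin n} (h : i ⋖ j) :
    nextVal f i = f j := by
  rw [Fin.covBy_iff, Nat.covBy_iff_add_one_eq] at h
  rw [nextVal, dif_pos (h ▸ j.isLt)]
  exact congrArg f (Fin.ext h)

lemma antitone_of_forall_nextVal_le [Preorder α] [Zero α] {f : Fin n → α}
    (hf : ∀ i, nextVal f i ≤ f i) : Antitone f :=
  (antitone_iff_forall_covBy f).2 fun i _ h => nextVal_of_covBy f h ▸ hf i

lemma forall_nextVal_lt_iff {k : Fin n → ℕ} :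
    (∀ i, nextVal k i < k i) ↔ StrictAnti k ∧ ∀ i, 0 < k i := by
  refine ⟨fun hk => ⟨?_, fun i => (Nat.zero_le _).trans_lt (hk i)⟩, ?_⟩
  · exact (strictAnti_iff_forall_covBy k).2 fun i _ h => nextVal_of_covBy k h ▸ hk i
  · rintro ⟨hanti, hpos⟩ i
    unfold nextVal
    split_ifs with h
    · exact hanti (Fin.mk_lt_mk.2 (Nat.lt_succ_self _))
    · exact hpos i

end NextVal

theorem card_filter_strictAnti_piFinset {α : Type*} [LinearOrder α] (n : ℕ) (s : Finset α) :
    #{f ∈ Fintype.piFinset fun _ : Fin n => s | StrictAnti f} = (#s).choose n := by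
  rw [← card_powersetCard]
  refine card_bij (fun f _ => univ.image f) ?_ ?_ ?_
  · intro f hf
    rw [mem_filter, Fintype.mem_piFinset] at hf
    rw [mem_powersetCard, card_image_of_injective _ hf.2.injective, card_univ, Fintype.card_fin]
    exact ⟨image_subset_iff.2 fun i _ => hf.1 i, rfl⟩
  · intro f hf g hg hfg
    rw [← (mem_filter.1 hf).2.range_inj (mem_filter.1 hg).2]
    simpa using congrArg (fun s : Finset α => (s : Set α)) hfg
  · intro t ht
    rw [mem_powersetCard] at ht
    have hanti : StrictAnti (t.orderEmbOfFin ht.2 ∘ Fin.rev) :=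
      (t.orderEmbOfFin ht.2).strictMono.comp_strictAnti Fin.rev_strictAnti
    have hmem : ∀ i, (t.orderEmbOfFin ht.2 ∘ Fin.rev) i ∈ s := fun i =>
      ht.1 (orderEmbOfFin_mem t ht.2 _)
    refine ⟨_, mem_filter.2 ⟨Fintype.mem_piFinset.2 hmem, hanti⟩, ?_⟩
    apply Finset.coe_injective
    rw [coe_image, coe_univ, Set.image_univ]
    exact (Fin.rev_surjective.range_comp _).trans (range_orderEmbOfFin t ht.2)

def strictAntiMaps (n N : ℕ) : Finset (Fin n → ℕ) :=
  {k ∈ Fintype.piFinset fun _ : Fin n => Icc 1 N | StrictAnti k}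

lemma mem_strictAntiMaps {n N : ℕ} {k : Fin n → ℕ} :
    k ∈ strictAntiMaps n N ↔ StrictAnti k ∧ (∀ i, 0 < k i) ∧ ∀ i, k i ≤ N := by
  simp only [strictAntiMaps, mem_filter, Fintype.mem_piFinset, mem_Icc, forall_and]
  tauto

lemma card_strictAntiMaps (n N : ℕ) : #(strictAntiMaps n N) = N.choose n := by
  rw [strictAntiMaps, card_filter_strictAnti_piFinset, Nat.card_Icc, Nat.add_sub_cancel]

section CompatibleMaps

variable {n : ℕ} (D : Finset (Fin n))

def compatibleMaps (t : ℕ) : Finset (Fin n → ℕ) :=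
  {g ∈ Fintype.piFinset fun _ => range (t + 1) |
    ∀ i, nextVal g i ≤ g i ∧ (i ∈ D → nextVal g i < g i)}

def nonDescentsFrom (i : Fin n) : ℕ := #{j ∈ Dᶜ | i ≤ j}

lemma nextVal_nonDescentsFrom_add (i : Fin n) :
    nextVal (nonDescentsFrom D) i + (if i ∈ D then 0 else 1) = nonDescentsFrom D i := by
  have hsplit : nonDescentsFrom D i = #{j ∈ Dᶜ | i < j} + #{j ∈ Dᶜ | j = i} := by
    rw [nonDescentsFrom, ← card_union_of_disjoint (disjoint_filter.2 fun j _ h => h.ne'),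
      ← filter_or]
    simp only [le_iff_lt_or_eq, eq_comm]
  have hnext : nextVal (nonDescentsFrom D) i = #{j ∈ Dᶜ | i < j} := by
    unfold nextVal nonDescentsFrom
    split_ifs with h
    · rfl -- `⟨i + 1, h⟩ ≤ j` unfolds to `i < j`
    · refine (card_eq_zero.2 (filter_false_of_mem fun j _ hij => h ?_)).symm
      have := j.isLt
      rw [Fin.lt_def] at hij
      omega
  rw [hsplit, hnext]
  split_ifs with hi <;> simp [filter_eq', hi]

lemma nonDescentsFrom_le_card_compl (i : Fin n) : nonDescentsFrom D i ≤ #Dᶜ :=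
  card_filter_le _ _

lemma nonDescentsFrom_zero (h : 0 < n) : nonDescentsFrom D ⟨0, h⟩ = #Dᶜ := by
  rw [nonDescentsFrom, filter_true_of_mem fun j _ => Fin.mk_le_of_le_val (Nat.zero_le _)]

lemma nonDescentsFrom_le_of_strictAnti {k : Fin n → ℕ} (hk : StrictAnti k)
    (hpos : ∀ i, 0 < k i) (i : Fin n) : nonDescentsFrom D i ≤ k i :=
  calc nonDescentsFrom D i ≤ #(Icc 1 (k i)) :=
        card_le_card_of_injOn k
          (fun j hj => mem_Icc.2 ⟨hpos j, hk.antitone (mem_filter.1 hj).2⟩) hk.injective.injOn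
    _ = k i := by simp

lemma compatible_at_iff_nextVal_lt (g : Fin n → ℕ) (i : Fin n) :
    (nextVal g i ≤ g i ∧ (i ∈ D → nextVal g i < g i)) ↔
      nextVal (g + nonDescentsFrom D) i < (g + nonDescentsFrom D) i := by
  have := nextVal_nonDescentsFrom_add D i
  rw [nextVal_add, Pi.add_apply]
  split_ifs at this with hi
  · simp only [hi, forall_const]
    omega
  · simp only [hi, false_imp_iff, and_true]
    omega

lemma compatible_iff_strictAnti (g : Fin n → ℕ) :
    (∀ i, nextVal g i ≤ g i ∧ (i ∈ D → nextVal g i < g i)) ↔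
      StrictAnti (g + nonDescentsFrom D) ∧ ∀ i, 0 < (g + nonDescentsFrom D) i := by
  simp only [compatible_at_iff_nextVal_lt, forall_nextVal_lt_iff]

variable {D} {t : ℕ}

lemma add_nonDescentsFrom_mem_strictAntiMaps {g : Fin n → ℕ} (hg : g ∈ compatibleMaps D t) :
    g + nonDescentsFrom D ∈ strictAntiMaps n (t + n - #D) := by
  simp only [compatibleMaps, mem_filter, Fintype.mem_piFinset, mem_range] at hg
  obtain ⟨hanti, hpos⟩ := (compatible_iff_strictAnti D g).1 hg.2
  refine mem_strictAntiMaps.2 ⟨hanti, hpos, fun i => ?_⟩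
  have := hg.1 i
  have := nonDescentsFrom_le_card_compl D i
  have : #Dᶜ + #D = n := (card_compl_add_card D).trans (Fintype.card_fin n)
  simp only [Pi.add_apply]
  omega

lemma sub_nonDescentsFrom_mem_compatibleMaps {k : Fin n → ℕ}
    (hk : k ∈ strictAntiMaps n (t + n - #D)) : k - nonDescentsFrom D ∈ compatibleMaps D t := by
  obtain ⟨hanti, hpos, hbound⟩ := mem_strictAntiMaps.1 hk
  have hcompat := (compatible_iff_strictAnti D (k - nonDescentsFrom D)).2 <| by
    rw [tsub_add_cancel_of_le (nonDescentsFrom_le_of_strictAnti D hanti hpos)]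
    exact ⟨hanti, hpos⟩
  simp only [compatibleMaps, mem_filter, Fintype.mem_piFinset, mem_range]
  refine ⟨fun i => ?_, hcompat⟩
  have h0 : 0 < n := i.pos
  have hle_zero := antitone_of_forall_nextVal_le (fun i => (hcompat i).1)
    (Fin.mk_le_of_le_val (Nat.zero_le i) : (⟨0, h0⟩ : Fin n) ≤ i)
  have := hbound ⟨0, h0⟩
  have := nonDescentsFrom_zero D h0
  have : #Dᶜ + #D = n := (card_compl_add_card D).trans (Fintype.card_fin n)
  simp only [Pi.sub_apply] at hle_zero ⊢
  omega

end CompatibleMaps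

theorem card_compatibleMaps {n : ℕ} (D : Finset (Fin n)) (t : ℕ) :
    #(compatibleMaps D t) = (t + n - #D).choose n := by
  rw [← card_strictAntiMaps]
  exact card_nbij' (· + nonDescentsFrom D) (· - nonDescentsFrom D)
    (fun _ hg => add_nonDescentsFrom_mem_strictAntiMaps hg)
    (fun _ hk => sub_nonDescentsFrom_mem_compatibleMaps hk)
    (fun g _ => add_tsub_cancel_right g _)
    (fun k hk => tsub_add_cancel_of_le <| by
      obtain ⟨hanti, hpos, -⟩ := mem_strictAntiMaps.1 hk
      exact nonDescentsFrom_le_of_strictAnti D hanti hpos)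

lemma Omega_eq_card_compatibleMaps {n : ℕ} (σ : Fin n → ℤ) (t : ℕ) :
    Omega σ t = #(compatibleMaps {i | nextVal σ i < σ i} t) := by
  refine congrArg card (filter_congr fun g _ => ?_)
  simp only [mem_filter, mem_univ, true_and]
  constructor
  · rintro ⟨hstep, hlast⟩ i
    unfold nextVal
    split_ifs with h
    · exact hstep i h
    · exact ⟨Nat.zero_le _, hlast i (by omega)⟩
  · intro hg
    refine ⟨fun i h => by simpa [nextVal, h] using hg i, fun i hi hpos => ?_⟩
    have hlast : ¬(i : ℕ) + 1 < n := by omega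
    simpa [nextVal, hlast, hpos, Nat.one_le_iff_ne_zero, Nat.pos_iff_ne_zero] using (hg i).2

lemma desB_eq_card {n : ℕ} (σ : Fin n → ℤ) : desB σ = #{i | nextVal σ i < σ i} := rfl

lemma desB_le {n : ℕ} (σ : Fin n → ℤ) : desB σ ≤ n :=
  (card_le_univ _).trans_eq (Fintype.card_fin n)

theorem Omega_eq_choose {n : ℕ} (σ : Fin n → ℤ) (t : ℕ) :
    Omega σ t = (t + n - desB σ).choose n := by
  rw [Omega_eq_card_compatibleMaps, card_compatibleMaps, desB_eq_card]

theorem PowerSeries.mk_choose_add_sub_mul_one_sub_pow {R : Type*} [CommRing R] {n d : ℕ}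
    (hd : d ≤ n) : (mk fun t => ((t + n - d).choose n : R)) * (1 - X) ^ (n + 1) = X ^ d := by
  have hshift : (mk fun t => ((t + n - d).choose n : R)) =
      X ^ d * mk fun t => ((n + t).choose n : R) := by
    ext t
    rw [coeff_mk, coeff_X_pow_mul', coeff_mk]
    split_ifs with h
    · congr 2
      omega
    · rw [Nat.choose_eq_zero_of_lt (by omega), Nat.cast_zero]
  rw [hshift, mul_assoc, mk_add_choose_mul_one_sub_pow_eq_one, mul_one]

theorem stmt4_general (n : ℕ) (σ : Fin n → ℤ) :
    (PowerSeries.mk fun t => (Omega σ t : ℤ)) * (1 - PowerSeries.X) ^ (n + 1)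
      = (PowerSeries.X : PowerSeries ℤ) ^ desB σ := by
  simp_rw [Omega_eq_choose]
  exact PowerSeries.mk_choose_add_sub_mul_one_sub_pow (desB_le σ)

theorem stmt4 (n : ℕ) (hn : 1 ≤ n) (σ : Fin n → ℤ)
    (hval : ∀ i, 1 ≤ |σ i| ∧ |σ i| ≤ (n : ℤ))
    (hinj : Function.Injective fun i => |σ i|) :
    (PowerSeries.mk fun t => (Omega σ t : ℤ)) * (1 - PowerSeries.X) ^ (n + 1)
      = (PowerSeries.X : PowerSeries ℤ) ^ desB σ :=
  stmt4_general n σ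
end

section
/- For s = (1,4,3,8,5,12,…), i.e., s_{2i−1} = 2i−1 and s_{2i} = 4i, the number of n-tuples (λ₁,…,λₙ) of nonnegative integers with λᵢ/sᵢ ≤ λᵢ₊₁/sᵢ₊₁ for 1 ≤ i ≤ n−1 and λₙ ≤ t·sₙ equals (t+1)^{⌈n/2⌉}(2t+1)^{⌊n/2⌋} for every nonnegative integer t. -/
open Finset

/-!
Let `g n m` count the tuples with `λ₁/s₁ ≤ ⋯ ≤ λₙ/sₙ` and `λₙ ≤ m`. Fixing the last part `λₙ₊₁ = j`
leaves a tuple of length `n` with `λₙ ≤ ⌊j sₙ / sₙ₊₁⌋`, so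
`g (n+1) m = ∑_{j ≤ m} g n ⌊j sₙ / sₙ₊₁⌋`, and the theorem asks for `g n (t sₙ)`.
For `s = (1,4,3,8,…)` the function `g n` is piecewise monomial in the quotient and remainder of
`m` by `sₙ`; this closed form is checked against the recursion one step `m → m + 1` at a time.
-/

lemma Fin.monotone_snoc_iff {α : Type*} [Preorder α] {n : ℕ} {f : Fin n → α} {a : α} :
    Monotone (Fin.snoc f a : Fin (n + 1) → α) ↔ Monotone f ∧ ∀ i, f i ≤ a := by
  refine ⟨fun h => ⟨fun i j hij => ?_, fun i => ?_⟩, fun ⟨hf, ha⟩ i j hij => ?_⟩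
  · simpa using h (Fin.castSucc_le_castSucc_iff.2 hij)
  · simpa using h (Fin.le_last (Fin.castSucc i))
  · induction j using Fin.lastCases with
    | last => induction i using Fin.lastCases <;> simp [ha]
    | cast j =>
      obtain ⟨i, rfl⟩ := Fin.exists_castSucc_eq.2
        (Fin.ne_last_of_lt (hij.trans_lt (Fin.castSucc_lt_last j)))
      simpa using hf (Fin.castSucc_le_castSucc_iff.1 hij)

namespace LectureHall

variable {s : ℕ → ℕ}

variable (s) in
def ratios {n : ℕ} (lam : Fin n → ℕ) (i : Fin n) : ℚ := lam i / s (i + 1)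

variable (s) in
/-- The box is implied by the other two conditions; it only makes this a `Finset`. -/
def tuples (n : ℕ) (q : ℚ) : Finset (Fin n → ℕ) :=
  (Fintype.piFinset fun i : Fin n => range (⌊q * s (i + 1)⌋₊ + 1)).filter fun lam =>
    Monotone (ratios s lam) ∧ ∀ i, ratios s lam i ≤ q

lemma ratios_snoc {n : ℕ} (lam : Fin n → ℕ) (j : ℕ) :
    ratios s (Fin.snoc lam j : Fin (n + 1) → ℕ) =
      Fin.snoc (ratios s lam) ((j : ℚ) / s (n + 1)) := by
  ext i
  induction i using Fin.lastCases <;> simp [ratios]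

lemma mem_tuples (hs : ∀ k, 0 < s (k + 1)) {n : ℕ} {q : ℚ} {lam : Fin n → ℕ} :
    lam ∈ tuples s n q ↔ Monotone (ratios s lam) ∧ ∀ i, ratios s lam i ≤ q := by
  refine ⟨fun h => (mem_filter.1 h).2, fun h => mem_filter.2 ⟨?_, h⟩⟩
  refine Fintype.mem_piFinset.2 fun i => mem_range_succ_iff.2 (Nat.le_floor ?_)
  exact (div_le_iff₀ (by exact_mod_cast hs i)).1 (h.2 i)

lemma monotone_ratios_iff (hs : ∀ k, 0 < s (k + 1)) {n : ℕ} {lam : Fin n → ℕ} :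
    Monotone (ratios s lam) ↔ ∀ i : Fin n, ∀ h : (i : ℕ) + 1 < n,
      lam i * s (i + 2) ≤ lam ⟨i + 1, h⟩ * s (i + 1) := by
  rcases n with _ | n
  · simp [Subsingleton.monotone]
  have step (i : Fin n) : ratios s lam i.castSucc ≤ ratios s lam i.succ ↔
      lam i.castSucc * s (i + 2) ≤ lam i.succ * s (i + 1) := by
    rw [ratios, ratios, div_le_div_iff₀ (by exact_mod_cast hs _) (by exact_mod_cast hs _)]
    norm_cast
  simp only [Fin.monotone_iff_le_succ, step]
  exact ⟨fun H i h => H ⟨i, by omega⟩, fun H i => H i.castSucc (by simp)⟩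

lemma snoc_mem_tuples_iff (hs : ∀ k, 0 < s (k + 1)) {n : ℕ} {q : ℚ} (hq : 0 ≤ q)
    {lam : Fin n → ℕ} {j : ℕ} :
    (Fin.snoc lam j : Fin (n + 1) → ℕ) ∈ tuples s (n + 1) q ↔
      lam ∈ tuples s n (j / s (n + 1)) ∧ j ≤ ⌊q * s (n + 1)⌋₊ := by
  have hpos : (0 : ℚ) < s (n + 1) := by exact_mod_cast hs n
  rw [mem_tuples hs, mem_tuples hs, ratios_snoc, Fin.monotone_snoc_iff, Fin.forall_fin_succ',
    Nat.le_floor_iff (by positivity), ← div_le_iff₀ hpos]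
  simp only [Fin.snoc_castSucc, Fin.snoc_last]
  exact ⟨fun ⟨⟨hm, hj⟩, _, hq⟩ => ⟨⟨hm, hj⟩, hq⟩,
    fun ⟨⟨hm, hj⟩, hq⟩ => ⟨⟨hm, hj⟩, fun i => (hj i).trans hq, hq⟩⟩

lemma card_tuples_succ (hs : ∀ k, 0 < s (k + 1)) {n : ℕ} {q : ℚ} (hq : 0 ≤ q) :
    #(tuples s (n + 1) q) =
      ∑ j ∈ range (⌊q * s (n + 1)⌋₊ + 1), #(tuples s n (j / s (n + 1))) := by
  rw [card_eq_sum_card_fiberwise (s := tuples s (n + 1) q) (f := fun lam => lam (Fin.last n))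
    fun lam hlam => Fintype.mem_piFinset.1 (mem_filter.1 hlam).1 (Fin.last n)]
  refine sum_congr rfl fun j hj => card_nbij' Fin.init (Fin.snoc · j) ?_ ?_ ?_ ?_
  · intro lam hlam
    obtain ⟨hlam, rfl⟩ := mem_filter.1 hlam
    exact ((snoc_mem_tuples_iff hs hq).1 (by rwa [Fin.snoc_init_self])).1
  · intro lam hlam
    exact mem_filter.2 ⟨(snoc_mem_tuples_iff hs hq).2 ⟨hlam, mem_range_succ_iff.1 hj⟩,
      Fin.snoc_last _ _⟩
  · intro lam hlam
    simp only [← (mem_filter.1 hlam).2, Fin.snoc_init_self]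
  · intro lam _
    exact Fin.init_snoc _ _

lemma card_tuples_zero (q : ℚ) : #(tuples s 0 q) = 1 := by
  rw [card_eq_one]
  refine ⟨Fin.elim0, eq_singleton_iff_unique_mem.2 ⟨mem_filter.2 ⟨?_, ?_⟩, ?_⟩⟩
  · exact Fintype.mem_piFinset.2 fun i => i.elim0
  · exact ⟨Subsingleton.monotone _, fun i => i.elim0⟩
  · exact fun _ _ => Subsingleton.elim _ _

theorem card_tuples_eq (hs : ∀ k, 0 < s (k + 1)) {g : ℕ → ℕ → ℕ} (hg₀ : ∀ m, g 0 m = 1)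
    (hg : ∀ n m, g (n + 1) m = ∑ j ∈ range (m + 1), g n (j * s n / s (n + 1)))
    (n : ℕ) {q : ℚ} (hq : 0 ≤ q) : #(tuples s n q) = g n ⌊q * s n⌋₊ := by
  induction n generalizing q with
  | zero => rw [card_tuples_zero, hg₀]
  | succ n ih =>
    rw [card_tuples_succ hs hq, hg]
    refine sum_congr rfl fun j _ => ?_
    rw [ih (by positivity), div_mul_eq_mul_div, ← Nat.cast_mul, Nat.floor_div_eq_div]

theorem lhall_eq_card_tuples (hs : ∀ k, 0 < s (k + 1)) (n t : ℕ) :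
    lhall s n t = #(tuples s n t) := by
  rw [lhall, tuples]
  simp only [← Nat.cast_mul, Nat.floor_natCast]
  refine congrArg card (filter_congr fun lam hlam => ?_)
  rw [monotone_ratios_iff hs, iff_self_and]
  intro _ i
  rw [ratios, div_le_iff₀ (by exact_mod_cast hs i)]
  exact_mod_cast mem_range_succ_iff.1 (Fintype.mem_piFinset.1 hlam i)

end LectureHall

/-- As `r` runs from `0` to `a + k`, `ladder a k t r` climbs from `(t+1)^a (2t+1)^k` to
`(t+2)^a (2t+3)^k`: first the factors `2t+1` become `2t+3` one at a time, then the factors `t+1`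
become `t+2`. -/
def ladder (a k t r : ℕ) : ℕ :=
  if r ≤ k then (t + 1) ^ a * (2 * t + 3) ^ r * (2 * t + 1) ^ (k - r)
  else (t + 1) ^ (a + k - r) * (t + 2) ^ (r - k) * (2 * t + 3) ^ k

namespace ladder

variable {a k t r : ℕ}

lemma of_le (h : r ≤ k) :
    ladder a k t r = (t + 1) ^ a * (2 * t + 3) ^ r * (2 * t + 1) ^ (k - r) :=
  if_pos h

lemma of_ge (h : k ≤ r) :
    ladder a k t r = (t + 1) ^ (a + k - r) * (t + 2) ^ (r - k) * (2 * t + 3) ^ k := by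
  rcases h.lt_or_eq with h | rfl
  · exact if_neg (by omega)
  · simp [ladder]

lemma add_eq_succ_zero (a k t : ℕ) : ladder a k t (a + k) = ladder a k (t + 1) 0 := by
  rw [of_ge (by omega), of_le (by omega)]
  simp only [Nat.sub_self, add_tsub_cancel_right, Nat.sub_zero]
  ring

lemma succ_eq_add_two_mul (hr : r ≤ k) :
    ladder a (k + 1) t (r + 1) = ladder a (k + 1) t r + 2 * ladder a k t r := by
  rw [of_le (by omega), of_le (by omega), of_le hr, Nat.add_sub_add_right, Nat.sub_add_comm hr]
  ring

lemma succ_eq_add (hk : k ≤ r) (hr : r ≤ a + k) :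
    ladder (a + 1) k t (r + 1) = ladder (a + 1) k t r + ladder a k t r := by
  rw [of_ge (by omega), of_ge hk, of_ge hk, show a + 1 + k - (r + 1) = a + k - r by omega,
    show a + 1 + k - r = a + k - r + 1 by omega, Nat.sub_add_comm hk]
  ring

lemma two_mul_eq_add (hr : r ≤ k) :
    2 * ladder (a + 1) k t r = ladder a (k + 1) t r + ladder a k t r := by
  rw [of_le hr, of_le (by omega), of_le hr, Nat.sub_add_comm hr]
  ring

lemma two_mul_succ_eq_add (hk : k ≤ r) (hr : r ≤ a + k) :
    2 * ladder (a + 1) k t (r + 1) = ladder a (k + 1) t (r + 1) + ladder a k t r := by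
  rw [of_ge (by omega), of_ge (by omega), of_ge hk, show a + 1 + k - (r + 1) = a + k - r by omega,
    show a + (k + 1) - (r + 1) = a + k - r by omega, Nat.add_sub_add_right, Nat.sub_add_comm hk]
  ring

lemma succ_eq_two_mul_add (hr : r ≤ a + k) :
    ladder a (k + 1) t (r + 1) = 2 * ladder (a + 1) k t r + ladder a k t r := by
  rcases le_total r k with h | h
  · rw [of_le (by omega), of_le h, of_le h, Nat.add_sub_add_right]
    ring
  · rw [of_ge (by omega), of_ge h, of_ge h, show a + (k + 1) - (r + 1) = a + k - r by omega,
      show a + 1 + k - r = a + k - r + 1 by omega, Nat.add_sub_add_right]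
    ring

end ladder

lemma mul_add_div_mod_of_lt {p t r : ℕ} (hr : r < p) :
    (p * t + r) / p = t ∧ (p * t + r) % p = r :=
  ⟨by rw [Nat.mul_add_div (by omega), Nat.div_eq_of_lt hr, add_zero], by rw [mul_comm, Nat.mul_add_mod_of_lt hr]⟩

def oddClosedForm (k m : ℕ) : ℕ := ladder (k + 1) k (m / (2 * k + 1)) (m % (2 * k + 1))

def evenClosedForm (k m : ℕ) : ℕ :=
  if Even (m % (4 * k + 4)) then ladder (k + 1) (k + 1) (m / (4 * k + 4)) (m % (4 * k + 4) / 2)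
  else 2 * ladder (k + 2) k (m / (4 * k + 4)) (m % (4 * k + 4) / 2)

lemma oddClosedForm_eq {k t r : ℕ} (hr : r ≤ 2 * k + 1) :
    oddClosedForm k ((2 * k + 1) * t + r) = ladder (k + 1) k t r := by
  rcases hr.lt_or_eq with hr | rfl
  · obtain ⟨hq, hm⟩ := mul_add_div_mod_of_lt (t := t) hr
    rw [oddClosedForm, hq, hm]
  · obtain ⟨hq, hm⟩ := mul_add_div_mod_of_lt (p := 2 * k + 1) (t := t + 1) (r := 0) (by omega)
    rw [oddClosedForm, show (2 * k + 1) * t + (2 * k + 1) = (2 * k + 1) * (t + 1) + 0 by ring,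
      hq, hm, ← ladder.add_eq_succ_zero, show k + 1 + k = 2 * k + 1 by ring]

lemma evenClosedForm_eq_even {k t b : ℕ} (hb : b ≤ 2 * k + 2) :
    evenClosedForm k ((4 * k + 4) * t + 2 * b) = ladder (k + 1) (k + 1) t b := by
  rcases hb.lt_or_eq with hb | rfl
  · obtain ⟨hq, hm⟩ := mul_add_div_mod_of_lt (p := 4 * k + 4) (t := t) (r := 2 * b) (by omega)
    rw [evenClosedForm, hq, hm, if_pos (even_two_mul b), Nat.mul_div_cancel_left _ two_pos]
  · obtain ⟨hq, hm⟩ := mul_add_div_mod_of_lt (p := 4 * k + 4) (t := t + 1) (r := 0) (by omega)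
    rw [evenClosedForm, show (4 * k + 4) * t + 2 * (2 * k + 2) = (4 * k + 4) * (t + 1) + 0 by ring,
      hq, hm, ← ladder.add_eq_succ_zero, show k + 1 + (k + 1) = 2 * k + 2 by ring]
    simp

lemma evenClosedForm_eq_odd {k t b : ℕ} (hb : b ≤ 2 * k + 1) :
    evenClosedForm k ((4 * k + 4) * t + (2 * b + 1)) = 2 * ladder (k + 2) k t b := by
  obtain ⟨hq, hm⟩ := mul_add_div_mod_of_lt (p := 4 * k + 4) (t := t) (r := 2 * b + 1) (by omega)
  rw [evenClosedForm, hq, hm, if_neg (by simp), show (2 * b + 1) / 2 = b by omega]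

lemma oddClosedForm_succ (k m : ℕ) :
    oddClosedForm (k + 1) (m + 1) =
      oddClosedForm (k + 1) m + evenClosedForm k ((m + 1) * (4 * k + 4) / (2 * k + 3)) := by
  obtain ⟨t, r, hr, rfl⟩ : ∃ t r, r < 2 * k + 3 ∧ m = (2 * k + 3) * t + r :=
    ⟨_, _, Nat.mod_lt m (by omega), (Nat.div_add_mod m _).symm⟩
  have hp : 2 * k + 3 = 2 * (k + 1) + 1 := by ring
  rw [add_assoc, hp, oddClosedForm_eq (by omega), oddClosedForm_eq (by omega), ← hp, ← add_assoc]
  rcases le_or_gt r k with h | h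
  · rw [Nat.div_eq_of_lt_le (k := (4 * k + 4) * t + (2 * r + 1)) (by nlinarith) (by nlinarith),
      evenClosedForm_eq_odd (by omega), ladder.succ_eq_add_two_mul h]
  · rw [Nat.div_eq_of_lt_le (k := (4 * k + 4) * t + 2 * r) (by nlinarith) (by nlinarith),
      evenClosedForm_eq_even (by omega), ladder.succ_eq_add (by omega) (by omega)]

lemma evenClosedForm_succ (k m : ℕ) :
    evenClosedForm k (m + 1) =
      evenClosedForm k m + oddClosedForm k ((m + 1) * (2 * k + 1) / (4 * k + 4)) := by
  obtain ⟨t, ρ, hρ, rfl⟩ : ∃ t ρ, ρ < 4 * k + 4 ∧ m = (4 * k + 4) * t + ρ :=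
    ⟨_, _, Nat.mod_lt m (by omega), (Nat.div_add_mod m _).symm⟩
  obtain ⟨b, rfl | rfl⟩ := Nat.even_or_odd' ρ
  · rw [add_assoc, evenClosedForm_eq_odd (by omega), evenClosedForm_eq_even (by omega)]
    rcases le_or_gt b k with h | h
    · rw [Nat.div_eq_of_lt_le (k := (2 * k + 1) * t + b) (by nlinarith) (by nlinarith),
        oddClosedForm_eq (by omega), ladder.two_mul_eq_add h]
    · obtain ⟨c, rfl⟩ : ∃ c, b = c + 1 := ⟨b - 1, by omega⟩
      rw [Nat.div_eq_of_lt_le (k := (2 * k + 1) * t + c) (by nlinarith) (by nlinarith),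
        oddClosedForm_eq (by omega), ladder.two_mul_succ_eq_add (by omega) (by omega)]
  · rw [add_assoc, show 2 * b + 1 + 1 = 2 * (b + 1) by ring, evenClosedForm_eq_even (by omega),
      evenClosedForm_eq_odd (by omega),
      Nat.div_eq_of_lt_le (k := (2 * k + 1) * t + b) (by nlinarith) (by nlinarith),
      oddClosedForm_eq (by omega), ladder.succ_eq_two_mul_add (by omega)]

lemma sA_odd (k : ℕ) : sA (2 * k + 1) = 2 * k + 1 := if_pos (by omega)

lemma sA_even (k : ℕ) : sA (2 * k + 2) = 4 * k + 4 := by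
  rw [sA, if_neg (by omega)]
  ring

lemma sA_succ_pos (k : ℕ) : 0 < sA (k + 1) := by
  unfold sA
  split <;> omega

/-- The closed form of the number of tuples of length `n` with `λ₁/s₁ ≤ ⋯ ≤ λₙ/sₙ` and `λₙ ≤ m`,
for `s = sA`. -/
def closedForm : ℕ → ℕ → ℕ
  | 0, _ => 1
  | n + 1, m => if Even n then oddClosedForm (n / 2) m else evenClosedForm (n / 2) m

lemma closedForm_odd (k m : ℕ) : closedForm (2 * k + 1) m = oddClosedForm k m := by
  simp [closedForm]

lemma closedForm_even (k m : ℕ) : closedForm (2 * k + 2) m = evenClosedForm k m := by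
  simp only [closedForm, Nat.not_even_bit1, if_false]
  congr 1
  omega

lemma closedForm_zero_right (n : ℕ) : closedForm n 0 = 1 := by
  rcases n with _ | n
  · rfl
  · simp only [closedForm]
    split_ifs <;> simp [oddClosedForm, evenClosedForm, ladder]

lemma closedForm_succ_succ (n m : ℕ) :
    closedForm (n + 1) (m + 1) =
      closedForm (n + 1) m + closedForm n ((m + 1) * sA n / sA (n + 1)) := by
  obtain ⟨k, rfl | rfl⟩ := Nat.even_or_odd' n
  · rcases k with _ | k
    · simp [closedForm, oddClosedForm, ladder, Nat.mod_one]
    · have h : 2 * (k + 1) + 1 = 2 * k + 3 := by ring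
      rw [closedForm_odd, closedForm_odd, h, show 2 * (k + 1) = 2 * k + 2 by ring, closedForm_even,
        sA_even, ← h, sA_odd, h, oddClosedForm_succ]
  · rw [show 2 * k + 1 + 1 = 2 * k + 2 by ring, closedForm_even, closedForm_even, closedForm_odd,
      sA_odd, sA_even, evenClosedForm_succ]

lemma closedForm_succ (n m : ℕ) :
    closedForm (n + 1) m = ∑ j ∈ range (m + 1), closedForm n (j * sA n / sA (n + 1)) := by
  induction m with
  | zero => simp [closedForm_zero_right]
  | succ m ih => rw [sum_range_succ, ← ih, closedForm_succ_succ]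

lemma closedForm_mul_sA (n t : ℕ) :
    closedForm n (t * sA n) = (t + 1) ^ ((n + 1) / 2) * (2 * t + 1) ^ (n / 2) := by
  obtain ⟨k, rfl | rfl⟩ := Nat.even_or_odd' n
  · rcases k with _ | k
    · rfl
    · rw [show 2 * (k + 1) = 2 * k + 2 by ring, closedForm_even, sA_even, mul_comm,
        ← add_zero ((4 * k + 4) * t), ← mul_zero 2, evenClosedForm_eq_even (by omega),
        ladder.of_le (by omega), Nat.sub_zero, show (2 * k + 2 + 1) / 2 = k + 1 by omega,
        show (2 * k + 2) / 2 = k + 1 by omega]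
      ring
  · rw [closedForm_odd, sA_odd, mul_comm, ← add_zero ((2 * k + 1) * t), oddClosedForm_eq (by omega),
      ladder.of_le (by omega), Nat.sub_zero, show (2 * k + 1 + 1) / 2 = k + 1 by omega,
      show (2 * k + 1) / 2 = k by omega]
    ring

open Polynomial PowerSeries

theorem stmt17 (n t : ℕ) :
    lhall sA n t = (t + 1) ^ ((n + 1) / 2) * (2 * t + 1) ^ (n / 2) := by
  rw [LectureHall.lhall_eq_card_tuples sA_succ_pos,
    LectureHall.card_tuples_eq sA_succ_pos (fun _ => rfl) closedForm_succ n (Nat.cast_nonneg t),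
    ← Nat.cast_mul, Nat.floor_natCast, closedForm_mul_sA]
end

section
/- For any sequence s = (s₁,s₂,…) of positive integers and any n ≥ 1, ∑_{t≥0} f_n^{(s)}(t) x^t = (1/(1−x)^{n+1}) ∑_e x^{asc(e)}, where the inner sum ranges over all s-inversion sequences e of length n. -/
open Finset

/-!
Write a lecture-hall tuple as `λᵢ = sᵢ qᵢ - eᵢ` with `qᵢ = ⌈λᵢ / sᵢ⌉` and `0 ≤ eᵢ < sᵢ`, so that
`e` is an `s`-inversion sequence. Since the fractional parts `eᵢ / sᵢ` lie in `[0, 1)`,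
`λᵢ / sᵢ ≤ λᵢ₊₁ / sᵢ₊₁` holds iff `qᵢ + [eᵢ / sᵢ < eᵢ₊₁ / sᵢ₊₁] ≤ qᵢ₊₁`, and `0 ≤ λ₁` iff
`[0 < e₁] ≤ q₁`. So for fixed `e` the tuples correspond to sequences `q ≤ t` that must jump at
each ascent of `e`. Subtracting from `qᵢ` the number of ascents up to `i` and adding `i` turns
them into strictly increasing sequences in `[0, t + n - asc e)`, whence
`f_n(t) = ∑ₑ C(t + n - asc e, n)`, and `∑ₜ C(t + n - a, n) xᵗ = xᵃ / (1 - x)ⁿ⁺¹`.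
-/

theorem mul_le_mul_iff_add_ite_le {a b q q' e e' l l' : ℕ} (he : e < a) (he' : e' < b)
    (hl : l + e = a * q) (hl' : l' + e' = b * q') :
    l * b ≤ l' * a ↔ q + (if e * b < e' * a then 1 else 0) ≤ q' := by
  have hab : 0 ≤ (a : ℤ) * b := by positivity
  have hea : (e' : ℤ) * a < b * a := by gcongr; omega
  have heb : (e : ℤ) * b < a * b := by gcongr; omega
  have he0 : 0 ≤ (e : ℤ) * b := by positivity
  have he0' : 0 ≤ (e' : ℤ) * a := by positivity
  -- `l * b ≤ l' * a` reads `e' a - e b ≤ a b (q' - q)`, where `|e' a - e b| < a b`.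
  zify at *
  rw [eq_sub_of_add_eq hl, eq_sub_of_add_eq hl']
  split_ifs with h
  · constructor
    · intro h1
      by_contra h2
      nlinarith [mul_nonneg hab (by linarith : (0 : ℤ) ≤ q - q')]
    · intro h1
      nlinarith [mul_nonneg hab (by linarith : (0 : ℤ) ≤ q' - q - 1)]
  · constructor
    · intro h1
      by_contra h2
      nlinarith [mul_nonneg hab (by linarith : (0 : ℤ) ≤ q - q' - 1)]
    · intro h1
      nlinarith [mul_nonneg hab (by linarith : (0 : ℤ) ≤ q' - q)]

theorem Nat.sub_mod_mod_eq_iff_dvd_add {a l e : ℕ} (he : e < a) :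
    (a - l % a) % a = e ↔ a ∣ l + e := by
  have hr : l % a < a := Nat.mod_lt l (by omega)
  conv_rhs => rw [← Nat.div_add_mod l a, add_assoc, Nat.dvd_add_right (dvd_mul_right a _)]
  rcases Nat.eq_zero_or_pos (l % a) with h0 | hpos
  · rw [h0, Nat.sub_zero, Nat.mod_self, zero_add]
    exact ⟨fun h => h ▸ dvd_zero a, fun h => (Nat.eq_zero_of_dvd_of_lt h he).symm⟩
  · rw [Nat.mod_eq_of_lt (by omega : a - l % a < a)]
    refine ⟨fun h => ⟨1, by omega⟩, fun h => ?_⟩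
    have := Nat.eq_of_dvd_of_lt_two_mul (by omega) h (by omega)
    omega

theorem Fin.strictMono_of_lt_succ {n : ℕ} {α : Type*} [Preorder α] {g : Fin n → α}
    (h : ∀ i : Fin n, ∀ hi : (i : ℕ) + 1 < n, g i < g ⟨(i : ℕ) + 1, hi⟩) : StrictMono g := by
  cases n with
  | zero => exact fun i => i.elim0
  | succ m => exact Fin.strictMono_iff_lt_succ.2 fun i => h i.castSucc (by simp)

theorem StrictMono.apply_add_sub_le {n : ℕ} {g : Fin n → ℕ} (hg : StrictMono g) {i j : Fin n}
    (hij : i ≤ j) : g i + (j - i) ≤ g j := by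
  obtain ⟨d, hd⟩ : ∃ d, (j : ℕ) = i + d := ⟨j - i, by omega⟩
  induction d generalizing j with
  | zero => obtain rfl : j = i := Fin.ext (by omega); simp
  | succ d ih =>
    have hm := ih (j := ⟨i + d, by omega⟩) (Fin.le_def.2 (by simp)) rfl
    have := hg (show (⟨i + d, by omega⟩ : Fin n) < j from
      Fin.lt_def.2 (by show (i : ℕ) + d < j; omega))
    simp only at hm
    omega

theorem StrictMono.val_le_apply {n : ℕ} {g : Fin n → ℕ} (hg : StrictMono g) (i : Fin n) :
    (i : ℕ) ≤ g i := by
  have := hg.apply_add_sub_le (i := ⟨0, i.pos⟩) (j := i) (Fin.le_def.2 (Nat.zero_le _))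
  simp only at this
  omega

theorem StrictMono.apply_add_sub_lt {n N : ℕ} {g : Fin n → ℕ} (hg : StrictMono g)
    (hN : ∀ i, g i < N) (i : Fin n) : g i + (n - 1 - i) < N :=
  calc g i + (n - 1 - i) ≤ g ⟨n - 1, Nat.sub_lt i.pos one_pos⟩ :=
        hg.apply_add_sub_le (j := ⟨n - 1, _⟩) (Fin.le_def.2 (Nat.le_sub_one_of_lt i.2))
    _ < N := hN _

open Classical in
theorem card_strictMono_piFinset_range (n N : ℕ) :
    #{g ∈ Fintype.piFinset fun _ : Fin n => range N | StrictMono g} = N.choose n := by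
  conv_rhs => rw [← card_range N, ← card_powersetCard]
  refine card_bij (fun g _ => univ.image g) (fun g hg => ?_) (fun g₁ hg₁ g₂ hg₂ h => ?_)
    (fun S hS => ?_)
  · simp only [mem_filter, Fintype.mem_piFinset] at hg
    rw [mem_powersetCard, card_image_of_injective _ hg.2.injective, card_univ, Fintype.card_fin]
    exact ⟨fun x hx => by obtain ⟨i, -, rfl⟩ := mem_image.1 hx; exact hg.1 i, rfl⟩
  · have hcard : #(univ.image g₁) = n := by
      rw [card_image_of_injective _ (mem_filter.1 hg₁).2.injective, card_univ, Fintype.card_fin]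
    exact (orderEmbOfFin_unique hcard (fun i => mem_image_of_mem g₁ (mem_univ i))
      (mem_filter.1 hg₁).2).trans (orderEmbOfFin_unique hcard
        (fun i => h ▸ mem_image_of_mem g₂ (mem_univ i)) (mem_filter.1 hg₂).2).symm
  · obtain ⟨hsub, hcard⟩ := mem_powersetCard.1 hS
    refine ⟨S.orderEmbOfFin hcard, ?_, image_orderEmbOfFin_univ S hcard⟩
    simp only [mem_filter, Fintype.mem_piFinset]
    exact ⟨fun i => hsub (orderEmbOfFin_mem S hcard i), (S.orderEmbOfFin hcard).strictMono⟩

def ascentChains (ε : ℕ → ℕ) (n t : ℕ) : Finset (Fin n → ℕ) :=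
  (Fintype.piFinset fun _ : Fin n => range (t + 1)).filter fun q =>
    (∀ h : 0 < n, ε 0 ≤ q ⟨0, h⟩) ∧
      ∀ i : Fin n, ∀ h : (i : ℕ) + 1 < n, q i + ε ((i : ℕ) + 1) ≤ q ⟨(i : ℕ) + 1, h⟩

section ascentChains

variable {ε : ℕ → ℕ} {n t : ℕ}

theorem sum_range_le_of_mem_ascentChains {q : Fin n → ℕ} (hq : q ∈ ascentChains ε n t)
    (i : Fin n) : ∑ j ∈ range (i + 1), ε j ≤ q i := by
  obtain ⟨-, h0, hstep⟩ := mem_filter.1 hq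
  obtain ⟨k, hk⟩ := i
  induction k with
  | zero => simpa using h0 hk
  | succ k ih =>
    rw [sum_range_succ]
    have := hstep ⟨k, by omega⟩ hk
    have := ih (by omega)
    dsimp only at *
    omega

theorem sum_range_le_sum_range_add_sub (hε : ∀ k, ε k ≤ 1) {k : ℕ} (hk : k < n) :
    ∑ j ∈ range n, ε j ≤ ∑ j ∈ range (k + 1), ε j + (n - 1 - k) := by
  rw [← sum_range_add_sum_Ico ε (show k + 1 ≤ n from hk)]
  grw [sum_le_card_nsmul (Ico (k + 1) n) ε 1 fun j _ => hε j]
  rw [smul_eq_mul, mul_one, Nat.card_Ico]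
  omega

theorem strictMono_sub_sum_of_mem_ascentChains (hε : ∀ k, ε k ≤ 1) {q : Fin n → ℕ}
    (hq : q ∈ ascentChains ε n t) :
    StrictMono (fun i : Fin n => q i + i - ∑ j ∈ range (i + 1), ε j) ∧
      ∀ i : Fin n, q i + i - ∑ j ∈ range (i + 1), ε j < t + n - ∑ j ∈ range n, ε j := by
  have hC := sum_range_le_of_mem_ascentChains hq
  obtain ⟨hqt, -, hstep⟩ := mem_filter.1 hq
  refine ⟨Fin.strictMono_of_lt_succ fun i hi => ?_, fun i => ?_⟩
  · have := hstep i hi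
    have := hC i
    have := hC ⟨i + 1, hi⟩
    have := sum_range_succ ε (i + 1)
    simp only at *
    omega
  · have := mem_range.1 (Fintype.mem_piFinset.1 hqt i)
    have := hC i
    have := sum_range_le_sum_range_add_sub hε i.2
    omega

theorem add_sum_sub_mem_ascentChains (hε : ∀ k, ε k ≤ 1) {g : Fin n → ℕ} (hg : StrictMono g)
    (hN : ∀ i, g i < t + n - ∑ j ∈ range n, ε j) :
    (fun i : Fin n => g i + ∑ j ∈ range (i + 1), ε j - i) ∈ ascentChains ε n t := by
  have ha : ∑ j ∈ range n, ε j ≤ n := by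
    simpa using sum_le_card_nsmul (range n) ε 1 fun j _ => hε j
  refine mem_filter.2 ⟨Fintype.mem_piFinset.2 fun i => mem_range.2 ?_, fun h0 => by simp,
    fun i hi => ?_⟩
  · have := hg.apply_add_sub_lt hN i
    have := sum_le_sum_of_subset (f := ε) (range_subset_range.2 (show (i : ℕ) + 1 ≤ n from i.2))
    omega
  · have := hg (show i < ⟨i + 1, hi⟩ from Fin.lt_def.2 (by simp))
    have := hg.val_le_apply i
    have := sum_range_succ ε (i + 1)
    dsimp only
    omega

open Classical in
theorem card_ascentChains (hε : ∀ k, ε k ≤ 1) :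
    #(ascentChains ε n t) = (t + n - ∑ k ∈ range n, ε k).choose n := by
  rw [← card_strictMono_piFinset_range]
  refine card_nbij' (fun q i => q i + i - ∑ j ∈ range (i + 1), ε j)
    (fun g i => g i + ∑ j ∈ range (i + 1), ε j - i) (fun q hq => ?_) (fun g hg => ?_)
    (fun q hq => ?_) (fun g hg => ?_)
  · obtain ⟨hmono, hlt⟩ := strictMono_sub_sum_of_mem_ascentChains hε hq
    exact mem_filter.2 ⟨Fintype.mem_piFinset.2 fun i => mem_range.2 (hlt i), hmono⟩
  · obtain ⟨hg, hmono⟩ := mem_filter.1 hg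
    exact add_sum_sub_mem_ascentChains hε hmono fun i => mem_range.1 (Fintype.mem_piFinset.1 hg i)
  · funext i
    have := sum_range_le_of_mem_ascentChains hq i
    dsimp only
    omega
  · funext i
    have := (mem_filter.1 hg).2.val_le_apply i
    dsimp only
    omega

end ascentChains

def lectureHallTuples (s : ℕ → ℕ) (n t : ℕ) : Finset (Fin n → ℕ) :=
  (Fintype.piFinset fun i : Fin n => Finset.range (t * s ((i : ℕ) + 1) + 1)).filter
    fun lam => ∀ i : Fin n, ∀ h : (i : ℕ) + 1 < n,
      lam i * s ((i : ℕ) + 2) ≤ lam ⟨(i : ℕ) + 1, h⟩ * s ((i : ℕ) + 1)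

def ascentIndicator (s : ℕ → ℕ) {n : ℕ} (e : Fin n → ℕ) : ℕ → ℕ
  | 0 => if h : 0 < n then if 0 < e ⟨0, h⟩ then 1 else 0 else 0
  | k + 1 => if h : k + 1 < n then
      if e ⟨k, by omega⟩ * s (k + 2) < e ⟨k + 1, h⟩ * s (k + 1) then 1 else 0 else 0

/-- `(-λᵢ) mod sᵢ`, that is `sᵢ ⌈λᵢ / sᵢ⌉ - λᵢ`. -/
def ceilRemainder (s : ℕ → ℕ) {n : ℕ} (lam : Fin n → ℕ) : Fin n → ℕ :=
  fun i => (s ((i : ℕ) + 1) - lam i % s ((i : ℕ) + 1)) % s ((i : ℕ) + 1)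

section lectureHall

variable {s : ℕ → ℕ} {n t : ℕ}

theorem ascentIndicator_zero (e : Fin n → ℕ) (h : 0 < n) :
    ascentIndicator s e 0 = if 0 < e ⟨0, h⟩ then 1 else 0 := by
  simp [ascentIndicator, h]

theorem ascentIndicator_succ (e : Fin n → ℕ) (i : Fin n) (hi : (i : ℕ) + 1 < n) :
    ascentIndicator s e (i + 1) =
      if e i * s (i + 2) < e ⟨i + 1, hi⟩ * s (i + 1) then 1 else 0 := by
  simp [ascentIndicator, hi]

theorem ascentIndicator_le_one (e : Fin n → ℕ) (k : ℕ) : ascentIndicator s e k ≤ 1 := by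
  cases k <;> simp only [ascentIndicator] <;> split_ifs <;> simp

theorem asc_eq_sum_ascentIndicator (hs : ∀ i, 1 ≤ i → 0 < s i) (e : Fin n → ℕ) :
    asc s e = ∑ k ∈ range n, ascentIndicator s e k := by
  rw [asc, card_filter, ← Fin.sum_univ_eq_sum_range]
  refine sum_congr rfl fun ⟨k, hk⟩ _ => ?_
  have hk1 : (0 : ℚ) < s (k + 1) := by exact_mod_cast hs _ (by omega)
  cases k with
  | zero => simp [ascentIndicator_zero e hk, div_pos_iff_of_pos_right hk1]
  | succ k =>
    have hk0 : (0 : ℚ) < s (k + 1) := by exact_mod_cast hs _ (by omega)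
    rw [ascentIndicator_succ e ⟨k, by omega⟩ hk]
    simp only [Nat.add_sub_cancel, add_eq_zero, one_ne_zero, and_false, if_false,
      div_lt_div_iff₀ hk0 hk1]
    norm_cast

theorem le_mul_of_mem_ascentChains (hs : ∀ i, 1 ≤ i → 0 < s i) {e q : Fin n → ℕ}
    (he : e ∈ invSeqs s n) (hq : q ∈ ascentChains (ascentIndicator s e) n t) (i : Fin n) :
    e i ≤ s (i + 1) * q i := by
  simp only [invSeqs, Fintype.mem_piFinset, mem_range] at he
  obtain ⟨-, h0, hstep⟩ := mem_filter.1 hq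
  obtain ⟨k, hk⟩ := i
  induction k with
  | zero =>
    have h0 := h0 hk
    have := he ⟨0, hk⟩
    rw [ascentIndicator_zero e hk] at h0
    split_ifs at h0 <;> nlinarith
  | succ k ih =>
    have hq := hstep ⟨k, by omega⟩ hk
    have ih := ih (by omega)
    have := he ⟨k + 1, hk⟩
    rw [ascentIndicator_succ e ⟨k, by omega⟩ hk] at hq
    split_ifs at hq with hA
    · nlinarith
    · have h1 : s (k + 1) * e ⟨k + 1, hk⟩ ≤ s (k + 1) * (s (k + 2) * q ⟨k, by omega⟩) := by
        nlinarith
      have := Nat.le_of_mul_le_mul_left h1 (hs _ (by omega))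
      nlinarith

theorem mem_lectureHallTuples_iff {e lam q : Fin n → ℕ}
    (he : e ∈ invSeqs s n) (hrel : ∀ i, lam i + e i = s (i + 1) * q i) :
    lam ∈ lectureHallTuples s n t ↔ q ∈ ascentChains (ascentIndicator s e) n t := by
  simp only [invSeqs, Fintype.mem_piFinset, mem_range] at he
  simp only [lectureHallTuples, ascentChains, mem_filter, Fintype.mem_piFinset, mem_range]
  refine and_congr (forall_congr' fun i => ?_)
    ⟨fun h => ⟨fun h0 => ?_, fun i hi => ?_⟩, fun h i hi => ?_⟩
  · have := hrel i
    have := he i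
    constructor <;> intro <;> nlinarith
  · have := hrel ⟨0, h0⟩
    rw [ascentIndicator_zero e h0]
    split_ifs <;> nlinarith
  · rw [ascentIndicator_succ e i hi]
    exact (mul_le_mul_iff_add_ite_le (he i) (he _) (hrel i) (hrel ⟨i + 1, hi⟩)).1 (h i hi)
  · have := h.2 i hi
    rw [ascentIndicator_succ e i hi] at this
    exact (mul_le_mul_iff_add_ite_le (he i) (he _) (hrel i) (hrel ⟨i + 1, hi⟩)).2 this

theorem card_filter_ceilRemainder_eq (hs : ∀ i, 1 ≤ i → 0 < s i) {e : Fin n → ℕ}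
    (he : e ∈ invSeqs s n) :
    #{lam ∈ lectureHallTuples s n t | ceilRemainder s lam = e} =
      #(ascentChains (ascentIndicator s e) n t) := by
  have hfiber : ∀ lam, ceilRemainder s lam = e ↔ ∀ i : Fin n, s (i + 1) ∣ lam i + e i := fun lam =>
    funext_iff.trans <| forall_congr' fun i => Nat.sub_mod_mod_eq_iff_dvd_add
      (mem_range.1 (Fintype.mem_piFinset.1 he i))
  refine card_nbij' (fun lam i => (lam i + e i) / s (i + 1)) (fun q i => s (i + 1) * q i - e i)
    (fun lam hlam => ?_) (fun q hq => ?_) (fun lam hlam => ?_) (fun q hq => ?_)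
  · obtain ⟨hlam, hdvd⟩ := mem_filter.1 hlam
    exact (mem_lectureHallTuples_iff he
      fun i => (Nat.mul_div_cancel' ((hfiber lam).1 hdvd i)).symm).1 hlam
  · have hrel : ∀ i : Fin n, s (i + 1) * q i - e i + e i = s (i + 1) * q i := fun i =>
      Nat.sub_add_cancel (le_mul_of_mem_ascentChains hs he hq i)
    refine mem_filter.2 ⟨(mem_lectureHallTuples_iff he hrel).2 hq, (hfiber _).2 fun i => ?_⟩
    rw [hrel]
    exact dvd_mul_right _ _
  · funext i
    dsimp only
    rw [Nat.mul_div_cancel' ((hfiber lam).1 (mem_filter.1 hlam).2 i), Nat.add_sub_cancel]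
  · funext i
    dsimp only
    rw [Nat.sub_add_cancel (le_mul_of_mem_ascentChains hs he hq i),
      Nat.mul_div_cancel_left _ (hs _ (by omega))]

theorem lhall_eq_sum_choose (hs : ∀ i, 1 ≤ i → 0 < s i) (n t : ℕ) :
    lhall s n t = ∑ e ∈ invSeqs s n, (t + n - asc s e).choose n := by
  have hmaps : Set.MapsTo (ceilRemainder s) (lectureHallTuples s n t : Set (Fin n → ℕ))
      (invSeqs s n) := by
    intro lam _
    rw [mem_coe, invSeqs, Fintype.mem_piFinset]
    exact fun i => mem_range.2 (Nat.mod_lt _ (hs _ (Nat.le_add_left 1 i)))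
  rw [lhall, ← lectureHallTuples, card_eq_sum_card_fiberwise hmaps]
  refine sum_congr rfl fun e he => ?_
  rw [card_filter_ceilRemainder_eq hs he, card_ascentChains (ascentIndicator_le_one e),
    asc_eq_sum_ascentIndicator hs]

end lectureHall

theorem asc_le (s : ℕ → ℕ) {n : ℕ} (e : Fin n → ℕ) : asc s e ≤ n :=
  (card_filter_le _ _).trans (card_fin n).le

namespace PowerSeries

theorem mk_choose_add_sub_mul_one_sub_pow_s18 {R : Type*} [CommRing R] {a n : ℕ} (ha : a ≤ n) :
    (mk fun t => ((t + n - a).choose n : R)) * (1 - X) ^ (n + 1) = X ^ a := by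
  have hshift : (mk fun t => ((t + n - a).choose n : R)) =
      (mk fun t => ((n + t).choose n : R)) * X ^ a := by
    ext t
    rw [coeff_mul_X_pow', coeff_mk]
    split_ifs with h
    · rw [coeff_mk, show t + n - a = n + (t - a) by omega]
    · rw [Nat.choose_eq_zero_of_lt (by omega), Nat.cast_zero]
  rw [hshift, mul_right_comm, mk_add_choose_mul_one_sub_pow_eq_one, one_mul]

end PowerSeries

open Polynomial PowerSeries

theorem stmt18_general (s : ℕ → ℕ) (hs : ∀ i, 1 ≤ i → 0 < s i) (n : ℕ) :
    (PowerSeries.mk fun t => (lhall s n t : ℤ)) * (1 - PowerSeries.X) ^ (n + 1)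
      = ∑ e ∈ invSeqs s n, (PowerSeries.X : PowerSeries ℤ) ^ asc s e := by
  have hseries : (PowerSeries.mk fun t => (lhall s n t : ℤ)) =
      ∑ e ∈ invSeqs s n, PowerSeries.mk fun t => ((t + n - asc s e).choose n : ℤ) := by
    ext t
    simp [lhall_eq_sum_choose hs]
  rw [hseries, sum_mul]
  exact sum_congr rfl fun e _ => mk_choose_add_sub_mul_one_sub_pow_s18 (asc_le s e)

theorem stmt18 (s : ℕ → ℕ) (hs : ∀ i, 1 ≤ i → 0 < s i) (n : ℕ) (hn : 1 ≤ n) :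
    (PowerSeries.mk fun t => (lhall s n t : ℤ)) * (1 - PowerSeries.X) ^ (n + 1)
      = ∑ e ∈ invSeqs s n, (PowerSeries.X : PowerSeries ℤ) ^ asc s e :=
  stmt18_general s hs n
end

section
/- For n ≥ 1, the ascent-number generating functions over I_{2n} and I'_{2n} coincide: ∑_{e∈I_{2n}} x^{asc(e)} = ∑_{e∈I'_{2n}} x^{asc(e)}, where I_{2n} uses s = (1,4,3,8,5,12,…) and I'_{2n} uses s = (2,2,6,4,10,6,…). -/
open Finset

/-!
Read from left to right, whether position `i` of an `s`-inversion sequence is an ascent depends on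
the previous ratio `e_{i-1}/s_{i-1}` only through the number `k` of values `x < sᵢ` with `x/sᵢ`
above it, so the ascent polynomial obeys a transfer recursion in this state (`ascPoly`). Taking
the entries two at a time, a block `(s_{2l+1}, s_{2l+2})` with state `k` contributes, for each
second entry `b`, the polynomial `N + (x-1)m + (x-1)²(m-N)₊` with `N = s_{2l+1}` and `m = k + c`,
where `c` counts the first entries `a` with `a/N < b/s_{2l+2}` (`blockPoly`). The blocks are
`(2l+1, 4l+4)` for `I_{2n}` and `(4l+2, 2l+2)` for `I'_{2n}`. Let `A_l(k)`, `B_l(k)` be the ascent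
polynomials of the entries from block `l` on, entered in state `k` (`tailPolyA`, `tailPolyB`).
Matching the second entries `b = 2u, 2u+1` for `I_{2n}` with `b = u` for `I'_{2n}` gives, by
induction on the number of remaining blocks, `A_l(k) = B_l(2k+1)` for `k ≤ 2l` and
`2 B_l(2k+2) = A_l(k) + A_l(k+1)` for `k < l` (`TailIdentities`).
The theorem is the first identity at `l = k = 0`.
-/

section AscentPolynomials

open Polynomial

lemma sum_piFinset_fin_succ {α β : Type*} [AddCommMonoid β] {m : ℕ}
    (t : Fin (m + 1) → Finset α) (f : (Fin (m + 1) → α) → β) :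
    ∑ e ∈ Fintype.piFinset t, f e
      = ∑ a ∈ t 0, ∑ e ∈ Fintype.piFinset (fun i => t i.succ), f (Fin.cons a e) := by
  rw [← sum_product']
  refine sum_nbij' (fun e => (e 0, Fin.tail e)) (fun p => Fin.cons p.1 p.2) ?_ ?_ ?_ ?_ ?_
  · intro e he
    simpa [Fin.forall_fin_succ, Fin.tail] using he
  · intro p hp
    simpa [Fin.forall_fin_succ] using hp
  · intro e _
    exact Fin.cons_self_tail e
  · intro p _
    simp
  · intro e _
    rw [Fin.cons_self_tail]

lemma sum_range_two_mul {β : Type*} [AddCommMonoid β] (n : ℕ) (f : ℕ → β) :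
    ∑ i ∈ range (2 * n), f i = ∑ i ∈ range n, (f (2 * i) + f (2 * i + 1)) := by
  induction n with
  | zero => simp
  | succ n ih =>
    rw [mul_add, mul_one, sum_range_succ, sum_range_succ, sum_range_succ, ih, add_assoc]

lemma card_filter_range_of_iff {P : ℕ → Prop} [DecidablePred P] {N lo hi : ℕ} (hhi : hi ≤ N)
    (hP : ∀ x < N, P x ↔ lo ≤ x ∧ x < hi) : #{x ∈ range N | P x} = hi - lo := by
  rw [← Nat.card_Ico]
  congr 1
  ext x
  simp only [mem_filter, mem_range, mem_Ico]
  constructor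
  · rintro ⟨hx, h⟩
    exact (hP x hx).1 h
  · rintro h
    exact ⟨by omega, (hP x (by omega)).2 h⟩

lemma lt_card_filter_range_iff {P : ℕ → Prop} [DecidablePred P] (hP : Antitone P) {N a : ℕ}
    (ha : a < N) : a < #{x ∈ range N | P x} ↔ P a := by
  constructor
  · intro h
    by_contra hPa
    have hsub : {x ∈ range N | P x} ⊆ range a := fun x hx => by
      simp only [mem_filter, mem_range] at hx ⊢
      by_contra hxa
      exact hPa (hP (not_lt.1 hxa) hx.2)
    have := card_le_card hsub
    rw [card_range] at this
    omega
  · intro hPa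
    have hsub : range (a + 1) ⊆ {x ∈ range N | P x} := fun x hx => by
      simp only [mem_filter, mem_range] at hx ⊢
      exact ⟨by omega, hP (by omega) hPa⟩
    have := card_le_card hsub
    rw [card_range] at this
    omega

lemma le_add_card_filter_range_iff {P : ℕ → Prop} [DecidablePred P] (hP : Monotone P)
    {N a : ℕ} (ha : a < N) : N ≤ a + #{x ∈ range N | P x} ↔ P a := by
  have hsplit : #{x ∈ range N | P x} + #{x ∈ range N | ¬P x} = N := by
    rw [card_filter_add_card_filter_not, card_range]
  have hneg := lt_card_filter_range_iff (P := fun x => ¬P x) (fun x y hxy h h' => h (hP hxy h')) ha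
  constructor
  · intro h
    by_contra hPa
    have := hneg.2 hPa
    omega
  · intro hPa
    by_contra h
    exact hneg.1 (by omega) hPa

def ascFrom {m : ℕ} (r : ℚ) (s : ℕ → ℕ) (e : Fin m → ℕ) : ℕ :=
  (Finset.univ.filter fun i : Fin m =>
    (if (i : ℕ) = 0 then r
     else (e ⟨(i : ℕ) - 1, Nat.lt_of_le_of_lt (Nat.sub_le _ _) i.isLt⟩ : ℚ) / s (i : ℕ))
      < (e i : ℚ) / s ((i : ℕ) + 1)).card

lemma asc_eq_ascFrom {m : ℕ} (s : ℕ → ℕ) (e : Fin m → ℕ) : asc s e = ascFrom 0 s e :=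
  rfl

lemma ascFrom_cons {m : ℕ} (r : ℚ) (s : ℕ → ℕ) (a : ℕ) (e : Fin m → ℕ) :
    ascFrom r s (Fin.cons a e)
      = (if r < a / s 1 then 1 else 0) + ascFrom (a / s 1) (fun i => s (i + 1)) e := by
  unfold ascFrom
  rw [card_filter, card_filter, Fin.sum_univ_succ]
  congr 1
  refine sum_congr rfl fun i _ => ?_
  rcases i with ⟨_ | j, hj⟩ <;> rfl

def numAbove (r : ℚ) (N : ℕ) : ℕ := #{x ∈ range N | r < ((x : ℕ) : ℚ) / N}

def numBelow (r : ℚ) (N : ℕ) : ℕ := #{x ∈ range N | ((x : ℕ) : ℚ) / N < r}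

lemma lt_div_iff_le_add_numAbove (r : ℚ) {N a : ℕ} (ha : a < N) :
    r < a / N ↔ N ≤ a + numAbove r N :=
  (le_add_card_filter_range_iff (P := fun x : ℕ => r < (x : ℚ) / N)
    (fun _ _ hxy h => h.trans_le (by gcongr)) ha).symm

lemma div_lt_iff_lt_numBelow (r : ℚ) {N a : ℕ} (ha : a < N) :
    (a / N : ℚ) < r ↔ a < numBelow r N :=
  (lt_card_filter_range_iff (P := fun x : ℕ => (x : ℚ) / N < r)
    (fun _ _ hxy h => lt_of_le_of_lt (by gcongr) h) ha).symm

noncomputable def ascPoly : (ℕ → ℕ) → ℕ → ℕ → ℤ[X]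
  | _, 0, _ => 1
  | s, m + 1, k => ∑ a ∈ range (s 1),
      (if s 1 ≤ a + k then X else 1) * ascPoly (fun i => s (i + 1)) m (numAbove (a / s 1) (s 2))

theorem sum_pow_ascFrom (s : ℕ → ℕ) (m : ℕ) (r : ℚ) :
    ∑ e ∈ invSeqs s m, (X : ℤ[X]) ^ ascFrom r s e = ascPoly s m (numAbove r (s 1)) := by
  induction m generalizing s r with
  | zero => simp [invSeqs, ascFrom, ascPoly]
  | succ m ih =>
    rw [invSeqs, sum_piFinset_fin_succ, ascPoly]
    refine sum_congr rfl fun a ha => ?_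
    simp only [ascFrom_cons, pow_add, pow_ite, pow_one, pow_zero, ← mul_sum,
      lt_div_iff_le_add_numAbove r (mem_range.1 ha)]
    exact congrArg _ (ih _ _)

noncomputable def blockPoly (N m : ℕ) : ℤ[X] :=
  (N : ℤ[X]) + (X - 1) * (m : ℤ[X]) + (X - 1) ^ 2 * ((m - N : ℕ) : ℤ[X])

lemma blockPoly_add {N N' m m' : ℕ} (h : (m - N) + (m' - N') = (m + m') - (N + N')) :
    blockPoly N m + blockPoly N' m' = blockPoly (N + N') (m + m') := by
  simp only [blockPoly, ← h]
  push_cast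
  ring

lemma two_mul_blockPoly (N m : ℕ) : 2 * blockPoly N m = blockPoly (2 * N) (2 * m) := by
  rw [two_mul, blockPoly_add (by omega), two_mul, two_mul]

lemma blockPoly_add_blockPoly_succ (N m : ℕ) :
    blockPoly N m + blockPoly N (m + 1) = blockPoly (2 * N) (2 * m + 1) := by
  rw [blockPoly_add (by omega)]
  congr 1 <;> ring

lemma blockPoly_add_blockPoly_add_two {N m : ℕ} (h : m + 1 ≠ N) :
    blockPoly N m + blockPoly N (m + 2) = 2 * blockPoly N (m + 1) := by
  rw [blockPoly_add (by omega), two_mul_blockPoly]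
  congr 1 <;> ring

lemma ite_X_one (p : Prop) [Decidable p] :
    (if p then X else 1 : ℤ[X]) = 1 + (X - 1) * if p then 1 else 0 := by
  split_ifs <;> ring

lemma sum_ite_mul_ite {N k c : ℕ} (hk : k ≤ N) (hc : c ≤ N) :
    ∑ a ∈ range N, (if N ≤ a + k then X else 1 : ℤ[X]) * (if a < c then X else 1)
      = blockPoly N (k + c) := by
  have hterm : ∀ a, (if N ≤ a + k then X else 1 : ℤ[X]) * (if a < c then X else 1)
      = 1 + (X - 1) * ((if N ≤ a + k then 1 else 0) + (if a < c then 1 else 0))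
        + (X - 1) ^ 2 * if N ≤ a + k ∧ a < c then 1 else 0 := by
    intro a
    rw [ite_X_one, ite_X_one, ite_and]
    split_ifs <;> ring
  simp only [hterm, sum_add_distrib, ← mul_sum, sum_boole, sum_const, card_range, nsmul_eq_mul,
    mul_one]
  rw [card_filter_range_of_iff (lo := N - k) (hi := N) le_rfl (by intros; omega),
    card_filter_range_of_iff (lo := 0) (hi := c) hc (by intros; omega),
    card_filter_range_of_iff (lo := N - k) (hi := c) hc (by intros; omega), blockPoly,
    show N - (N - k) = k by omega, Nat.sub_zero, show c - (N - k) = k + c - N by omega]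
  push_cast
  ring

lemma numBelow_le (r : ℚ) (N : ℕ) : numBelow r N ≤ N :=
  (card_filter_le _ _).trans (card_range N).le

theorem ascPoly_add_two (s : ℕ → ℕ) (m : ℕ) {k : ℕ} (hk : k ≤ s 1) :
    ascPoly s (m + 2) k = ∑ b ∈ range (s 2), blockPoly (s 1) (k + numBelow (b / s 2) (s 1))
      * ascPoly (fun i => s (i + 2)) m (numAbove (b / s 2) (s 3)) := by
  simp only [ascPoly, mul_sum]
  rw [sum_comm]
  refine sum_congr rfl fun b hb => ?_
  have hcond : ∀ a ∈ range (s 1),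
      s 2 ≤ b + numAbove (a / s 1) (s 2) ↔ a < numBelow (b / s 2) (s 1) :=
    fun a ha => (lt_div_iff_le_add_numAbove _ (mem_range.1 hb)).symm.trans
      (div_lt_iff_lt_numBelow _ (mem_range.1 ha))
  rw [← sum_ite_mul_ite hk (numBelow_le _ _), sum_mul]
  refine sum_congr rfl fun a ha => ?_
  rw [if_congr (hcond a ha) rfl rfl]
  ring

lemma numBelow_div_eq {p q N c : ℕ} (hq : 0 < q) (hc : c ≤ N) (h₁ : p * N ≤ c * q)
    (h₂ : c * q < p * N + q) : numBelow (p / q) N = c := by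
  rw [numBelow, card_filter_range_of_iff (lo := 0) hc, Nat.sub_zero]
  intro x hx
  rw [div_lt_div_iff₀ (by exact_mod_cast (Nat.zero_le x).trans_lt hx) (by positivity)]
  norm_cast
  simp only [zero_le, true_and]
  constructor
  · intro h
    by_contra hxc
    nlinarith
  · intro h
    nlinarith

lemma numAbove_div_eq {p q N c : ℕ} (hq : 0 < q) (h₁ : p * N < c * q)
    (h₂ : c * q ≤ p * N + q) : numAbove (p / q) N = N - c := by
  rw [numAbove, card_filter_range_of_iff (hi := N) le_rfl]
  intro x hx
  rw [div_lt_div_iff₀ (by positivity) (by exact_mod_cast (Nat.zero_le x).trans_lt hx)]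
  norm_cast
  constructor
  · intro h
    refine ⟨?_, hx⟩
    by_contra hxc
    nlinarith
  · intro h
    nlinarith [h.1]

lemma numAbove_zero (N : ℕ) : numAbove 0 N = N - 1 := by
  simpa using numAbove_div_eq (p := 0) (q := 1) (N := N) (c := 1) one_pos (by simp) (by simp)

lemma sA_of_odd {k : ℕ} (h : k % 2 = 1) : sA k = k := if_pos h
lemma sA_of_even {k : ℕ} (h : k % 2 = 0) : sA k = 2 * k := if_neg (by omega)
lemma sB_of_odd {k : ℕ} (h : k % 2 = 1) : sB k = 2 * k := if_pos h
lemma sB_of_even {k : ℕ} (h : k % 2 = 0) : sB k = k := if_neg (by omega)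

noncomputable def tailPolyA (l j k : ℕ) : ℤ[X] := ascPoly (fun i => sA (i + 2 * l)) (2 * j) k

noncomputable def tailPolyB (l j k : ℕ) : ℤ[X] := ascPoly (fun i => sB (i + 2 * l)) (2 * j) k

lemma tailPolyA_zero (l k : ℕ) : tailPolyA l 0 k = 1 := rfl
lemma tailPolyB_zero (l k : ℕ) : tailPolyB l 0 k = 1 := rfl

theorem tailPolyA_succ (l j : ℕ) {k : ℕ} (hk : k ≤ 2 * l + 1) :
    tailPolyA l (j + 1) k = ∑ u ∈ range (2 * l + 2),
      if u ≤ l then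
        blockPoly (4 * l + 2) (2 * k + 2 * u + 1) * tailPolyA (l + 1) j (2 * l + 2 - u)
      else blockPoly (2 * l + 1) (k + u)
        * (tailPolyA (l + 1) j (2 * l + 2 - u) + tailPolyA (l + 1) j (2 * l + 1 - u)) := by
  have h1 : sA (1 + 2 * l) = 2 * l + 1 := by rw [sA_of_odd (by omega)]; ring
  have h2 : sA (2 + 2 * l) = 4 * l + 4 := by rw [sA_of_even (by omega)]; ring
  have h3 : sA (3 + 2 * l) = 2 * l + 3 := by rw [sA_of_odd (by omega)]; ring
  have hshift : (fun i => sA (i + 2 + 2 * l)) = fun i => sA (i + 2 * (l + 1)) := by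
    funext i; congr 1; ring
  rw [tailPolyA, show 2 * (j + 1) = 2 * j + 2 by ring, ascPoly_add_two _ _ (by rw [h1]; exact hk)]
  simp only [h1, h2, h3, hshift]
  rw [show 4 * l + 4 = 2 * (2 * l + 2) by ring, sum_range_two_mul]
  refine sum_congr rfl fun u hu => ?_
  have hu' : u < 2 * l + 2 := mem_range.1 hu
  have hbelow : numBelow ((2 * u : ℕ) / (2 * (2 * l + 2) : ℕ)) (2 * l + 1) = u :=
    numBelow_div_eq (by omega) (by omega) (by nlinarith) (by nlinarith)
  have habove : numAbove ((2 * u : ℕ) / (2 * (2 * l + 2) : ℕ)) (2 * l + 3) = 2 * l + 2 - u := by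
    rw [numAbove_div_eq (c := u + 1) (by omega) (by nlinarith) (by nlinarith)]
    omega
  simp only [hbelow, habove, ← tailPolyA.eq_1]
  rcases le_or_gt u l with hul | hul
  · have hbelow' : numBelow ((2 * u + 1 : ℕ) / (2 * (2 * l + 2) : ℕ)) (2 * l + 1) = u + 1 :=
      numBelow_div_eq (by omega) (by omega) (by nlinarith) (by nlinarith)
    have habove' :
        numAbove ((2 * u + 1 : ℕ) / (2 * (2 * l + 2) : ℕ)) (2 * l + 3) = 2 * l + 2 - u := by
      rw [numAbove_div_eq (c := u + 1) (by omega) (by nlinarith) (by nlinarith)]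
      omega
    rw [hbelow', habove', if_pos hul, ← add_mul, ← add_assoc, blockPoly_add_blockPoly_succ]
    congr 2 <;> ring
  · have hbelow' : numBelow ((2 * u + 1 : ℕ) / (2 * (2 * l + 2) : ℕ)) (2 * l + 1) = u :=
      numBelow_div_eq (by omega) (by omega) (by nlinarith) (by nlinarith)
    have habove' :
        numAbove ((2 * u + 1 : ℕ) / (2 * (2 * l + 2) : ℕ)) (2 * l + 3) = 2 * l + 1 - u := by
      rw [numAbove_div_eq (c := u + 2) (by omega) (by nlinarith) (by nlinarith)]
      omega
    rw [hbelow', habove', if_neg hul.not_ge]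
    ring

theorem tailPolyB_succ (l j : ℕ) {k : ℕ} (hk : k ≤ 4 * l + 2) :
    tailPolyB l (j + 1) k = ∑ u ∈ range (2 * l + 2),
      if u ≤ l then blockPoly (4 * l + 2) (k + 2 * u) * tailPolyB (l + 1) j (4 * l + 5 - 2 * u)
      else blockPoly (4 * l + 2) (k + 2 * u - 1) * tailPolyB (l + 1) j (4 * l + 4 - 2 * u) := by
  have h1 : sB (1 + 2 * l) = 4 * l + 2 := by rw [sB_of_odd (by omega)]; ring
  have h2 : sB (2 + 2 * l) = 2 * l + 2 := by rw [sB_of_even (by omega)]; ring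
  have h3 : sB (3 + 2 * l) = 4 * l + 6 := by rw [sB_of_odd (by omega)]; ring
  have hshift : (fun i => sB (i + 2 + 2 * l)) = fun i => sB (i + 2 * (l + 1)) := by
    funext i; congr 1; ring
  rw [tailPolyB, show 2 * (j + 1) = 2 * j + 2 by ring, ascPoly_add_two _ _ (by rw [h1]; exact hk)]
  simp only [h1, h2, h3, hshift, ← tailPolyB.eq_1]
  refine sum_congr rfl fun u hu => ?_
  have hu' : u < 2 * l + 2 := mem_range.1 hu
  rcases le_or_gt u l with hul | hul
  · have hbelow : numBelow ((u : ℕ) / (2 * l + 2 : ℕ)) (4 * l + 2) = 2 * u :=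
      numBelow_div_eq (by omega) (by omega) (by nlinarith) (by nlinarith)
    have habove : numAbove ((u : ℕ) / (2 * l + 2 : ℕ)) (4 * l + 6) = 4 * l + 5 - 2 * u := by
      rw [numAbove_div_eq (c := 2 * u + 1) (by omega) (by nlinarith) (by nlinarith)]
      omega
    rw [hbelow, habove, if_pos hul]
  · obtain ⟨v, rfl⟩ : ∃ v, u = v + 1 := ⟨u - 1, by omega⟩
    have hbelow : numBelow ((v + 1 : ℕ) / (2 * l + 2 : ℕ)) (4 * l + 2) = 2 * v + 1 :=
      numBelow_div_eq (by omega) (by omega) (by nlinarith) (by nlinarith)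
    have habove :
        numAbove ((v + 1 : ℕ) / (2 * l + 2 : ℕ)) (4 * l + 6) = 4 * l + 4 - 2 * (v + 1) := by
      rw [numAbove_div_eq (c := 2 * v + 4) (by omega) (by nlinarith) (by nlinarith)]
      omega
    rw [hbelow, habove, if_neg hul.not_ge, show k + 2 * (v + 1) - 1 = k + (2 * v + 1) by omega]

def TailIdentities (l j : ℕ) : Prop :=
  (∀ k ≤ 2 * l, tailPolyA l j k = tailPolyB l j (2 * k + 1)) ∧
    ∀ k < l, 2 * tailPolyB l j (2 * k + 2) = tailPolyA l j k + tailPolyA l j (k + 1)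

lemma TailIdentities.two_mul_tailPolyB {l j u : ℕ} (h : TailIdentities (l + 1) j)
    (hlu : l + 1 ≤ u) (hu : u < 2 * l + 2) :
    2 * tailPolyB (l + 1) j (4 * l + 4 - 2 * u)
      = tailPolyA (l + 1) j (2 * l + 2 - u) + tailPolyA (l + 1) j (2 * l + 1 - u) := by
  have h' := h.2 (2 * l + 1 - u) (by omega)
  rw [show 2 * (2 * l + 1 - u) + 2 = 4 * l + 4 - 2 * u by omega,
    show 2 * l + 1 - u + 1 = 2 * l + 2 - u by omega] at h'
  rw [h', add_comm]

lemma TailIdentities.tailPolyB_odd {l j u : ℕ} (h : TailIdentities (l + 1) j) (hul : u ≤ l) :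
    tailPolyB (l + 1) j (4 * l + 5 - 2 * u) = tailPolyA (l + 1) j (2 * l + 2 - u) := by
  rw [h.1 (2 * l + 2 - u) (by omega), show 2 * (2 * l + 2 - u) + 1 = 4 * l + 5 - 2 * u by omega]

lemma TailIdentities.tailPolyA_succ_eq {l j k : ℕ} (h : TailIdentities (l + 1) j)
    (hk : k ≤ 2 * l) : tailPolyA l (j + 1) k = tailPolyB l (j + 1) (2 * k + 1) := by
  rw [tailPolyA_succ l j (by omega), tailPolyB_succ l j (by omega)]
  refine sum_congr rfl fun u hu => ?_
  have hu' := mem_range.1 hu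
  split_ifs with hul
  · rw [h.tailPolyB_odd hul, show 2 * k + 1 + 2 * u = 2 * k + 2 * u + 1 by ring]
  · rw [← h.two_mul_tailPolyB (by omega) hu', show 2 * k + 1 + 2 * u - 1 = 2 * (k + u) by omega,
      show 4 * l + 2 = 2 * (2 * l + 1) by ring, ← two_mul_blockPoly]
    ring

lemma TailIdentities.two_mul_tailPolyB_succ {l j k : ℕ} (h : TailIdentities (l + 1) j)
    (hk : k < l) :
    2 * tailPolyB l (j + 1) (2 * k + 2) = tailPolyA l (j + 1) k + tailPolyA l (j + 1) (k + 1) := by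
  rw [tailPolyB_succ l j (by omega), tailPolyA_succ l j (by omega), tailPolyA_succ l j (by omega),
    mul_sum, ← sum_add_distrib]
  refine sum_congr rfl fun u hu => ?_
  have hu' := mem_range.1 hu
  split_ifs with hul
  · rw [h.tailPolyB_odd hul, ← add_mul,
      show 2 * (k + 1) + 2 * u + 1 = 2 * k + 2 * u + 1 + 2 by ring,
      blockPoly_add_blockPoly_add_two (by omega),
      show 2 * k + 2 * u + 1 + 1 = 2 * k + 2 + 2 * u by ring]
    ring
  · rw [← add_mul, show k + 1 + u = k + u + 1 by ring, blockPoly_add_blockPoly_succ,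
      ← h.two_mul_tailPolyB (by omega) hu',
      show 2 * k + 2 + 2 * u - 1 = 2 * (k + u) + 1 by omega,
      show 2 * (2 * l + 1) = 4 * l + 2 by ring]
    ring

theorem tailIdentities (l j : ℕ) : TailIdentities l j := by
  induction j generalizing l with
  | zero =>
    refine ⟨fun _ _ => rfl, fun _ _ => ?_⟩
    simp only [tailPolyA_zero, tailPolyB_zero]
    ring
  | succ j ih =>
    exact ⟨fun _ hk => (ih (l + 1)).tailPolyA_succ_eq hk,
      fun _ hk => (ih (l + 1)).two_mul_tailPolyB_succ hk⟩

end AscentPolynomials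

open Polynomial PowerSeries

theorem stmt19_general (n : ℕ) :
    ∑ e ∈ invSeqs sA (2 * n), (Polynomial.X : Polynomial ℤ) ^ asc sA e
      = ∑ e ∈ invSeqs sB (2 * n), (Polynomial.X : Polynomial ℤ) ^ asc sB e := by
  simp only [asc_eq_ascFrom, sum_pow_ascFrom, numAbove_zero]
  show tailPolyA 0 n 0 = tailPolyB 0 n (2 * 0 + 1)
  exact (tailIdentities 0 n).1 0 le_rfl

theorem stmt19 (n : ℕ) (hn : 1 ≤ n) :
    ∑ e ∈ invSeqs sA (2 * n), (Polynomial.X : Polynomial ℤ) ^ asc sA e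
      = ∑ e ∈ invSeqs sB (2 * n), (Polynomial.X : Polynomial ℤ) ^ asc sB e :=
  stmt19_general n
end
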